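/- For all vectors p₁, p₂ ∈ ℝ^{nm} with 0 ≤ p₁ ≤ p₂ ≤ 1 entrywise, the matrices I + A(diag(p₁) + (I − diag(p₁))M) and I + A(diag(p₂) + (I − diag(p₂))M) are invertible and H(p₁) ≤ H(p₂) entrywise; that is, the map H is monotone on [0,1]^{nm}. -/

import Mathlib

open Matrix BigOperators Finset

/-- Spectral abscissa of a real square matrix: the maximum of the real parts of its
(complex) eigenvalues. -/
noncomputable def specAbscissa {k : Type*} [Fintype k] [DecidableEq k]
    (M : Matrix k k ℝ) : ℝ :=
  sSup {r : ℝ | ∃ z ∈ spectrum ℂ (M.map Complex.ofReal), z.re = r}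

/-- Diagonal `nm × nm` matrix (indexed by pairs `(α, i)`) built from rates `c^α_i`. -/
noncomputable def pairDiag {n m : ℕ} (c : Fin m → Fin n → ℝ) :
    Matrix (Fin m × Fin n) (Fin m × Fin n) ℝ :=
  Matrix.diagonal fun q => c q.1 q.2

/-- The equilibrium dispersal Laplacian `L*`: block-diagonal, whose `α`-th `n × n` block
has `(i,i)` entry `ν^α_i = ∑_{j ≠ i} q^α_{ij}` and `(i,j)` entry `-q^α_{ji} π^α_j / π^α_i`
for `j ≠ i`. -/
noncomputable def Lstar {n m : ℕ} (Q : Fin m → Matrix (Fin n) (Fin n) ℝ)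
    (piv : Fin m → Fin n → ℝ) : Matrix (Fin m × Fin n) (Fin m × Fin n) ℝ :=
  Matrix.of fun q q' =>
    if q.1 = q'.1 then
      (if q.2 = q'.2 then ∑ j ∈ Finset.univ \ {q.2}, Q q.1 q.2 j
       else -(Q q.1 q'.2 q.2 * piv q.1 q'.2 / piv q.1 q.2))
    else 0

/-- The equilibrium population-fraction matrix `F*`: the `(α,σ)` block is the diagonal
matrix with entries `f^{*σ}_i = N^σ π^σ_i / ∑_τ N^τ π^τ_i` (the same row of blocks
repeated for every `α`). -/
noncomputable def Fstar {n m : ℕ} (N : Fin m → ℝ) (piv : Fin m → Fin n → ℝ) :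
    Matrix (Fin m × Fin n) (Fin m × Fin n) ℝ :=
  Matrix.of fun q q' =>
    if q.2 = q'.2 then N q'.1 * piv q'.1 q.2 / ∑ τ, N τ * piv τ q.2 else 0

/-- The matrix `A = (L* + D)⁻¹ B`. -/
noncomputable def Amat {n m : ℕ} (Q : Fin m → Matrix (Fin n) (Fin n) ℝ)
    (piv : Fin m → Fin n → ℝ) (β δ : Fin m → Fin n → ℝ) :
    Matrix (Fin m × Fin n) (Fin m × Fin n) ℝ :=
  (Lstar Q piv + pairDiag δ)⁻¹ * pairDiag β

/-- The fixed-point map `H(p) = (I + A(diag(p) + (I − diag(p)) M))⁻¹ A p`. -/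
noncomputable def Hmap {n m : ℕ} (A Mlap : Matrix (Fin m × Fin n) (Fin m × Fin n) ℝ)
    (p : Fin m × Fin n → ℝ) : Fin m × Fin n → ℝ :=
  ((1 + A * (Matrix.diagonal p + (1 - Matrix.diagonal p) * Mlap))⁻¹).mulVec (A.mulVec p)

/-!
For `0 ≤ p ≤ 1` put `T(p) = diag p + (I - diag p) M` and `W(p) = L* + D + B T(p)`. Since
`I + A T(p) = (L* + D)⁻¹ W(p)`, we get `H(p) = W(p)⁻¹ B p`. Each `W(p)` is a Z-matrix with row
sums `δ + β p ≥ 0` in which, by irreducibility of the dispersal within each layer, every node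
is chained to a node with `δ > 0`; the minimum principle then makes `W(p)` inverse-positive
(`W x ≥ 0 → x ≥ 0`). Comparing `x₁ = H(p₁)` with `W(p₂)⁻¹ B p₂` through `W(p₂) x₁ ≤ B p₂` gives
monotonicity.
-/

namespace Matrix

variable {ι : Type*} [Fintype ι]

theorem mulVec_one_apply (A : Matrix ι ι ℝ) (i : ι) : (A *ᵥ 1) i = ∑ j, A i j := by
  simp [mulVec, dotProduct]

/-- Weakly chained diagonally dominant Z-matrices; they are nonsingular M-matrices. -/
structure IsWeaklyChainedZMatrix (W : Matrix ι ι ℝ) : Prop where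
  off_diag_nonpos : ∀ i j, i ≠ j → W i j ≤ 0
  rowSum_nonneg : ∀ i, 0 ≤ ∑ j, W i j
  exists_chain : ∀ i, ∃ k, Relation.ReflTransGen (fun a b => W a b < 0) i k ∧ 0 < ∑ j, W k j

namespace IsWeaklyChainedZMatrix

variable {W : Matrix ι ι ℝ}

/-- Minimum principle: at a negative minimum of `v`, `0 ≤ (W *ᵥ v) a` forces the row sum of `a`
to vanish and every out-neighbour of `a` to be a minimum too, so the minimum propagates along
chains and never reaches a row with positive sum. -/
theorem nonneg_of_mulVec_nonneg (hW : W.IsWeaklyChainedZMatrix) {v : ι → ℝ}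
    (hv : 0 ≤ W *ᵥ v) : 0 ≤ v := by
  by_contra hneg
  obtain ⟨j, hj⟩ : ∃ j, v j < 0 := by simpa [Pi.le_def] using hneg
  obtain ⟨i, -, hi⟩ := Finset.exists_min_image Finset.univ v ⟨j, Finset.mem_univ j⟩
  have hmin : ∀ b, v i ≤ v b := fun b => hi b (Finset.mem_univ b)
  have hvi : v i < 0 := (hmin j).trans_lt hj
  have propagate : ∀ a, v a = v i → ∑ b, W a b = 0 ∧ ∀ b, W a b < 0 → v b = v i := by
    intro a ha
    have hterm : ∀ b, W a b * (v b - v a) ≤ 0 := fun b => by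
      rcases eq_or_ne a b with rfl | hab
      · simp
      · exact mul_nonpos_of_nonpos_of_nonneg (hW.off_diag_nonpos a b hab)
          (by linarith [hmin b])
    have hsplit : (W *ᵥ v) a = (∑ b, W a b) * v a + ∑ b, W a b * (v b - v a) := by
      simp only [mulVec, dotProduct, Finset.sum_mul, ← Finset.sum_add_distrib]
      exact Finset.sum_congr rfl fun b _ => by ring
    have hrest : ∑ b, W a b * (v b - v a) ≤ 0 := Finset.sum_nonpos fun b _ => hterm b
    have hrow : (∑ b, W a b) * v a ≤ 0 :=
      mul_nonpos_of_nonneg_of_nonpos (hW.rowSum_nonneg a) (by linarith)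
    have hva : 0 ≤ (W *ᵥ v) a := hv a
    have hrest0 : ∑ b, W a b * (v b - v a) = 0 := by linarith
    refine ⟨?_, fun b hb => ?_⟩
    · have hrow0 : (∑ b, W a b) * v a = 0 := by linarith
      exact (mul_eq_zero.1 hrow0).resolve_right (by linarith)
    · have hb0 := (Finset.sum_eq_zero_iff_of_nonpos fun b _ => hterm b).1 hrest0 b
        (Finset.mem_univ b)
      rw [mul_eq_zero] at hb0
      linarith [hb0.resolve_left hb.ne]
  obtain ⟨k, hik, hk⟩ := hW.exists_chain i
  have hvk : v k = v i := by
    clear hk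
    induction hik with
    | refl => rfl
    | tail _ hbc ih => exact (propagate _ ih).2 _ hbc
  exact hk.ne' (propagate k hvk).1

theorem le_of_mulVec_le (hW : W.IsWeaklyChainedZMatrix) {x y : ι → ℝ}
    (h : W *ᵥ x ≤ W *ᵥ y) : x ≤ y :=
  sub_nonneg.1 <| hW.nonneg_of_mulVec_nonneg <| by rwa [mulVec_sub, sub_nonneg]

theorem add (hW : W.IsWeaklyChainedZMatrix) {E : Matrix ι ι ℝ}
    (hE_off : ∀ i j, i ≠ j → E i j ≤ 0) (hE_row : ∀ i, 0 ≤ ∑ j, E i j) :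
    (W + E).IsWeaklyChainedZMatrix where
  off_diag_nonpos i j hij := add_nonpos (hW.off_diag_nonpos i j hij) (hE_off i j hij)
  rowSum_nonneg i := by
    simpa only [add_apply, Finset.sum_add_distrib] using
      add_nonneg (hW.rowSum_nonneg i) (hE_row i)
  exists_chain i := by
    obtain ⟨k, hik, hk⟩ := hW.exists_chain i
    refine ⟨k, Relation.ReflTransGen.lift' id (fun a b hab => ?_) i k hik, ?_⟩
    · rcases eq_or_ne a b with rfl | hne
      · exact Relation.ReflTransGen.refl
      · exact .single (by simpa using add_neg_of_neg_of_nonpos hab (hE_off a b hne))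
    · simpa only [add_apply, Finset.sum_add_distrib] using add_pos_of_pos_of_nonneg hk (hE_row k)

variable [DecidableEq ι]

theorem isUnit (hW : W.IsWeaklyChainedZMatrix) : IsUnit W :=
  mulVec_injective_iff_isUnit.1 fun _ _ h =>
    le_antisymm (hW.le_of_mulVec_le h.le) (hW.le_of_mulVec_le h.ge)

theorem mulVec_inv_mulVec (hW : W.IsWeaklyChainedZMatrix) (b : ι → ℝ) :
    W *ᵥ (W⁻¹ *ᵥ b) = b := by
  rw [mulVec_mulVec, mul_nonsing_inv _ ((isUnit_iff_isUnit_det W).1 hW.isUnit), one_mulVec]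

theorem le_inv_mulVec (hW : W.IsWeaklyChainedZMatrix) {x b : ι → ℝ} (h : W *ᵥ x ≤ b) :
    x ≤ W⁻¹ *ᵥ b :=
  hW.le_of_mulVec_le (by rwa [hW.mulVec_inv_mulVec])

theorem inv_mulVec_le (hW : W.IsWeaklyChainedZMatrix) {x b : ι → ℝ} (h : b ≤ W *ᵥ x) :
    W⁻¹ *ᵥ b ≤ x :=
  hW.le_of_mulVec_le (by rwa [hW.mulVec_inv_mulVec])

end IsWeaklyChainedZMatrix

variable [DecidableEq ι]

theorem diagonal_add_one_sub_diagonal_mul_one_sub (p : ι → ℝ) (F : Matrix ι ι ℝ) :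
    diagonal p + (1 - diagonal p) * (1 - F) = 1 - diagonal (1 - p) * F := by
  have h : 1 - diagonal p = diagonal (1 - p) := by
    rw [← diagonal_one, diagonal_sub]
    rfl
  rw [h, mul_sub, mul_one, ← add_sub_assoc, ← h, add_sub_cancel]

theorem diagonal_mul_one_sub_diagonal_mul_mulVec (β p : ι → ℝ) (F : Matrix ι ι ℝ) (x : ι → ℝ) :
    (diagonal β * (1 - diagonal (1 - p) * F)) *ᵥ x = β * (x - (1 - p) * F *ᵥ x) := by
  ext i
  simp [← mulVec_mulVec, sub_mulVec, mulVec_diagonal]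

theorem diagonal_mul_one_sub_diagonal_mul_apply_of_ne (β p : ι → ℝ) (F : Matrix ι ι ℝ)
    {i j : ι} (hij : i ≠ j) :
    (diagonal β * (1 - diagonal (1 - p) * F) : Matrix ι ι ℝ) i j
      = -(β i * ((1 - p i) * F i j)) := by
  simp [diagonal_mul, one_apply_ne hij]

variable {G F : Matrix ι ι ℝ} {β : ι → ℝ}

theorem IsWeaklyChainedZMatrix.add_diagonal_mul_one_sub (hG : G.IsWeaklyChainedZMatrix)
    (hβ : 0 ≤ β) (hF : ∀ i j, 0 ≤ F i j) (hF1 : ∀ i, ∑ j, F i j = 1) {p : ι → ℝ}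
    (hp0 : 0 ≤ p) (hp1 : p ≤ 1) :
    (G + diagonal β * (1 - diagonal (1 - p) * F)).IsWeaklyChainedZMatrix := by
  refine hG.add (fun i j hij => ?_) (fun i => ?_)
  · rw [diagonal_mul_one_sub_diagonal_mul_apply_of_ne β p F hij, neg_nonpos]
    exact mul_nonneg (hβ i) (mul_nonneg (sub_nonneg.2 (hp1 i)) (hF i j))
  · rw [← mulVec_one_apply, diagonal_mul_one_sub_diagonal_mul_mulVec]
    simpa [mulVec_one_apply, hF1] using mul_nonneg (hβ i) (hp0 i)

/-- With `x₁ = W(p₁)⁻¹ (β p₁)`: first `x₁ ≤ 1`, because `W(p₁) 1 ≥ β p₁` (nonnegative row sums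
of `G`); hence `F x₁ ≤ 1`, and then `W(p₂) x₁ = β p₁ + β (p₂ - p₁) F x₁ ≤ β p₂`. -/
theorem IsWeaklyChainedZMatrix.inv_add_diagonal_mul_one_sub_mulVec_mono
    (hG : G.IsWeaklyChainedZMatrix) (hβ : 0 ≤ β) (hF : ∀ i j, 0 ≤ F i j)
    (hF1 : ∀ i, ∑ j, F i j = 1) {p₁ p₂ : ι → ℝ} (hp₁0 : 0 ≤ p₁) (hp₁₂ : p₁ ≤ p₂)
    (hp₂1 : p₂ ≤ 1) :
    (G + diagonal β * (1 - diagonal (1 - p₁) * F))⁻¹ *ᵥ (β * p₁)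
      ≤ (G + diagonal β * (1 - diagonal (1 - p₂) * F))⁻¹ *ᵥ (β * p₂) := by
  have hW₁ := hG.add_diagonal_mul_one_sub hβ hF hF1 hp₁0 (hp₁₂.trans hp₂1)
  have hW₂ := hG.add_diagonal_mul_one_sub hβ hF hF1 (hp₁0.trans hp₁₂) hp₂1
  set x₁ := (G + diagonal β * (1 - diagonal (1 - p₁) * F))⁻¹ *ᵥ (β * p₁)
  have hWx₁ := hW₁.mulVec_inv_mulVec (β * p₁)
  have hx₁_le_one : x₁ ≤ 1 := hW₁.inv_mulVec_le fun i => by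
    have hGi := hG.rowSum_nonneg i
    rw [add_mulVec, Pi.add_apply, diagonal_mul_one_sub_diagonal_mul_mulVec, mulVec_one_apply]
    simp only [Pi.mul_apply, Pi.sub_apply, mulVec_one_apply, hF1, Pi.one_apply]
    linarith
  have hFx₁ : ∀ i, (F *ᵥ x₁) i ≤ 1 := fun i => by
    calc (F *ᵥ x₁) i = ∑ j, F i j * x₁ j := rfl
      _ ≤ ∑ j, F i j := Finset.sum_le_sum fun j _ =>
          mul_le_of_le_one_right (hF i j) (hx₁_le_one j)
      _ = 1 := hF1 i
  refine hW₂.le_inv_mulVec fun i => ?_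
  have h₁ := congrFun hWx₁ i
  simp only [add_mulVec, diagonal_mul_one_sub_diagonal_mul_mulVec, Pi.add_apply,
    Pi.mul_apply, Pi.sub_apply, Pi.one_apply] at h₁ ⊢
  have hgap : 0 ≤ β i * ((p₂ i - p₁ i) * (1 - (F *ᵥ x₁) i)) :=
    mul_nonneg (hβ i) (mul_nonneg (sub_nonneg.2 (hp₁₂ i)) (sub_nonneg.2 (hFx₁ i)))
  nlinarith

end Matrix

namespace Matrix

variable {ι R : Type*} [Fintype ι] [DecidableEq ι] [CommRing R] {G : Matrix ι ι R}

theorem one_add_inv_mul_mul_eq (hG : IsUnit G) (B T : Matrix ι ι R) :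
    1 + G⁻¹ * B * T = G⁻¹ * (G + B * T) := by
  rw [mul_add, nonsing_inv_mul _ ((isUnit_iff_isUnit_det G).1 hG), Matrix.mul_assoc]

theorem isUnit_one_add_inv_mul_mul (hG : IsUnit G) {B T : Matrix ι ι R}
    (hW : IsUnit (G + B * T)) : IsUnit (1 + G⁻¹ * B * T) := by
  rw [one_add_inv_mul_mul_eq hG]
  exact (isUnit_nonsing_inv_iff.2 hG).mul hW

theorem inv_one_add_inv_mul_mul_mulVec (hG : IsUnit G) (B T : Matrix ι ι R) (p : ι → R) :
    (1 + G⁻¹ * B * T)⁻¹ *ᵥ ((G⁻¹ * B) *ᵥ p) = (G + B * T)⁻¹ *ᵥ (B *ᵥ p) := by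
  have hGdet := (isUnit_iff_isUnit_det G).1 hG
  rw [one_add_inv_mul_mul_eq hG, mul_inv_rev, nonsing_inv_nonsing_inv _ hGdet, mulVec_mulVec,
    Matrix.mul_assoc, mul_nonsing_inv_cancel_left G B hGdet, mulVec_mulVec]

end Matrix

section Model

variable {n m : ℕ}

theorem Lstar_apply_of_ne_layer (Q : Fin m → Matrix (Fin n) (Fin n) ℝ) (piv : Fin m → Fin n → ℝ)
    {α σ : Fin m} (hασ : α ≠ σ) (i j : Fin n) : Lstar Q piv (α, i) (σ, j) = 0 :=
  if_neg hασ

theorem Lstar_apply_same_layer {Q : Fin m → Matrix (Fin n) (Fin n) ℝ}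
    (hQdiag : ∀ (α : Fin m) (i : Fin n), Q α i i = -∑ j ∈ Finset.univ \ {i}, Q α i j)
    {piv : Fin m → Fin n → ℝ} (hpiv : ∀ α i, 0 < piv α i) (α : Fin m) (i j : Fin n) :
    Lstar Q piv (α, i) (α, j) = -(Q α j i * piv α j / piv α i) := by
  rcases eq_or_ne i j with rfl | hij
  · simp only [Lstar, of_apply, if_true]
    rw [hQdiag, mul_div_cancel_right₀ _ (hpiv α i).ne', neg_neg]
  · simp [Lstar, hij]

theorem Lstar_rowSum {Q : Fin m → Matrix (Fin n) (Fin n) ℝ}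
    (hQdiag : ∀ (α : Fin m) (i : Fin n), Q α i i = -∑ j ∈ Finset.univ \ {i}, Q α i j)
    {piv : Fin m → Fin n → ℝ} (hpiv : ∀ α i, 0 < piv α i)
    (hpiveig : ∀ (α : Fin m) (i : Fin n), ∑ j, Q α j i * piv α j = 0) (q : Fin m × Fin n) :
    ∑ q', Lstar Q piv q q' = 0 := by
  obtain ⟨α, i⟩ := q
  rw [Fintype.sum_prod_type, Finset.sum_eq_single α]
  · simp_rw [Lstar_apply_same_layer hQdiag hpiv, Finset.sum_neg_distrib, ← Finset.sum_div,
      hpiveig, zero_div, neg_zero]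
  · exact fun σ _ hσ => Finset.sum_eq_zero fun j _ => Lstar_apply_of_ne_layer Q piv hσ.symm i j
  · exact fun h => absurd (Finset.mem_univ α) h

theorem Lstar_apply_nonpos_of_ne {Q : Fin m → Matrix (Fin n) (Fin n) ℝ}
    (hQoff : ∀ (α : Fin m) (i j : Fin n), i ≠ j → 0 ≤ Q α i j)
    {piv : Fin m → Fin n → ℝ} (hpiv : ∀ α i, 0 < piv α i) {q q' : Fin m × Fin n}
    (hqq' : q ≠ q') : Lstar Q piv q q' ≤ 0 := by
  obtain ⟨α, i⟩ := q
  obtain ⟨σ, j⟩ := q'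
  simp only [Lstar, of_apply]
  split_ifs with hασ hij
  · exact absurd (Prod.ext hασ hij) hqq'
  · subst hασ
    exact neg_nonpos.2 (div_nonneg (mul_nonneg (hQoff α j i (Ne.symm hij)) (hpiv α j).le)
      (hpiv α i).le)
  · exact le_rfl

theorem pairDiag_rowSum (c : Fin m → Fin n → ℝ) (q : Fin m × Fin n) :
    ∑ q', pairDiag c q q' = c q.1 q.2 := by
  simp [pairDiag, diagonal_apply]

/-- Within a layer, `L*` has an edge `(α, i) → (α, j)` whenever `q^α_{ji} > 0`, so
irreducibility of `Q^α` joins every node of the layer to a node `k` with `δ^α_k > 0`. -/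
theorem isWeaklyChainedZMatrix_Lstar_add_pairDiag {Q : Fin m → Matrix (Fin n) (Fin n) ℝ}
    (hQoff : ∀ (α : Fin m) (i j : Fin n), i ≠ j → 0 ≤ Q α i j)
    (hQdiag : ∀ (α : Fin m) (i : Fin n), Q α i i = -∑ j ∈ Finset.univ \ {i}, Q α i j)
    (hQirr : ∀ (α : Fin m) (i j : Fin n), Relation.ReflTransGen (fun a b => 0 < Q α a b) i j)
    {piv : Fin m → Fin n → ℝ} (hpiv : ∀ α i, 0 < piv α i)
    (hpiveig : ∀ (α : Fin m) (i : Fin n), ∑ j, Q α j i * piv α j = 0)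
    {δ : Fin m → Fin n → ℝ} (hδ : ∀ α i, 0 ≤ δ α i) (hδpos : ∀ α, ∃ k, 0 < δ α k) :
    (Lstar Q piv + pairDiag δ).IsWeaklyChainedZMatrix := by
  have hrow : ∀ q, ∑ q', (Lstar Q piv + pairDiag δ) q q' = δ q.1 q.2 := fun q => by
    simp only [Matrix.add_apply, Finset.sum_add_distrib, Lstar_rowSum hQdiag hpiv hpiveig,
      pairDiag_rowSum, zero_add]
  refine ⟨fun q q' hqq' => ?_, fun q => (hrow q).symm ▸ hδ q.1 q.2, fun ⟨α, i⟩ => ?_⟩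
  · simpa [pairDiag, diagonal_apply_ne _ hqq'] using Lstar_apply_nonpos_of_ne hQoff hpiv hqq'
  obtain ⟨k, hk⟩ := hδpos α
  refine ⟨(α, k), ?_, (hrow (α, k)).symm ▸ hk⟩
  refine Relation.ReflTransGen.lift' (fun j => (α, j)) (fun a b hab => ?_) i k
    (Relation.reflTransGen_swap.2 (hQirr α k i))
  rcases eq_or_ne a b with rfl | hab'
  · exact Relation.ReflTransGen.refl
  · have hne : ((α, a) : Fin m × Fin n) ≠ (α, b) := by simpa using hab'
    refine .single ?_
    simp only [Matrix.add_apply, Lstar_apply_same_layer hQdiag hpiv, pairDiag,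
      diagonal_apply_ne _ hne, add_zero, neg_lt_zero]
    exact div_pos (mul_pos hab (hpiv α b)) (hpiv α a)

theorem Fstar_nonneg {N : Fin m → ℝ} (hN : ∀ α, 0 < N α) {piv : Fin m → Fin n → ℝ}
    (hpiv : ∀ α i, 0 < piv α i) (q q' : Fin m × Fin n) : 0 ≤ Fstar N piv q q' := by
  simp only [Fstar, of_apply]
  split_ifs
  · exact div_nonneg (mul_pos (hN _) (hpiv _ _)).le
      (Finset.sum_nonneg fun τ _ => (mul_pos (hN τ) (hpiv τ _)).le)
  · exact le_rfl

theorem Fstar_rowSum {N : Fin m → ℝ} (hN : ∀ α, 0 < N α) {piv : Fin m → Fin n → ℝ}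
    (hpiv : ∀ α i, 0 < piv α i) (q : Fin m × Fin n) : ∑ q', Fstar N piv q q' = 1 := by
  have hpos : 0 < ∑ τ, N τ * piv τ q.2 :=
    Finset.sum_pos (fun τ _ => mul_pos (hN τ) (hpiv τ _)) ⟨q.1, Finset.mem_univ _⟩
  simp only [Fstar, of_apply, Fintype.sum_prod_type, Finset.sum_ite_eq, Finset.mem_univ,
    if_true, ← Finset.sum_div]
  exact div_self hpos.ne'

end Model

theorem Hmap_monotone_general
    {n m : ℕ}
    (Q : Fin m → Matrix (Fin n) (Fin n) ℝ)
    (hQoff : ∀ (α : Fin m) (i j : Fin n), i ≠ j → 0 ≤ Q α i j)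
    (hQdiag : ∀ (α : Fin m) (i : Fin n), Q α i i = -∑ j ∈ Finset.univ \ {i}, Q α i j)
    (hQirr : ∀ (α : Fin m) (i j : Fin n),
      Relation.ReflTransGen (fun a b => 0 < Q α a b) i j)
    (piv : Fin m → Fin n → ℝ) (hpivpos : ∀ α i, 0 < piv α i)
    (hpiveig : ∀ (α : Fin m) (i : Fin n), ∑ j, Q α j i * piv α j = 0)
    (N : Fin m → ℝ) (hN : ∀ α, 0 < N α)
    (β δ : Fin m → Fin n → ℝ)
    (hβ : ∀ α i, 0 < β α i) (hδ : ∀ α i, 0 ≤ δ α i)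
    (hδpos : ∀ α, ∃ k, 0 < δ α k)
    (p₁ p₂ : Fin m × Fin n → ℝ)
    (hp₁0 : ∀ q, 0 ≤ p₁ q) (hp₁₂ : ∀ q, p₁ q ≤ p₂ q) (hp₂1 : ∀ q, p₂ q ≤ 1) :
    IsUnit (1 + Amat Q piv β δ * (Matrix.diagonal p₁
        + (1 - Matrix.diagonal p₁) * (1 - Fstar N piv))) ∧
      IsUnit (1 + Amat Q piv β δ * (Matrix.diagonal p₂
        + (1 - Matrix.diagonal p₂) * (1 - Fstar N piv))) ∧
      (∀ q, Hmap (Amat Q piv β δ) (1 - Fstar N piv) p₁ q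
        ≤ Hmap (Amat Q piv β δ) (1 - Fstar N piv) p₂ q) := by
  have hG :=
    isWeaklyChainedZMatrix_Lstar_add_pairDiag hQoff hQdiag hQirr hpivpos hpiveig hδ hδpos
  set b : Fin m × Fin n → ℝ := fun q => β q.1 q.2
  have hb : 0 ≤ b := fun q => (hβ q.1 q.2).le
  have hF := Fstar_nonneg hN hpivpos
  have hF1 := Fstar_rowSum hN hpivpos
  have hA : Amat Q piv β δ = (Lstar Q piv + pairDiag δ)⁻¹ * diagonal b := rfl
  have hIsUnit : ∀ p, 0 ≤ p → p ≤ 1 →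
      IsUnit (1 + Amat Q piv β δ * (diagonal p + (1 - diagonal p) * (1 - Fstar N piv))) :=
    fun p hp0 hp1 => by
      rw [hA, diagonal_add_one_sub_diagonal_mul_one_sub]
      exact isUnit_one_add_inv_mul_mul hG.isUnit
        (hG.add_diagonal_mul_one_sub hb hF hF1 hp0 hp1).isUnit
  have hH : ∀ p, Hmap (Amat Q piv β δ) (1 - Fstar N piv) p
      = (Lstar Q piv + pairDiag δ + diagonal b * (1 - diagonal (1 - p) * Fstar N piv))⁻¹
        *ᵥ (b * p) := fun p => by
    rw [Hmap, hA, diagonal_add_one_sub_diagonal_mul_one_sub,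
      inv_one_add_inv_mul_mul_mulVec hG.isUnit]
    exact congrArg _ (funext (mulVec_diagonal b p))
  refine ⟨hIsUnit p₁ hp₁0 (fun q => (hp₁₂ q).trans (hp₂1 q)),
    hIsUnit p₂ (fun q => (hp₁0 q).trans (hp₁₂ q)) hp₂1, fun q => ?_⟩
  rw [hH, hH]
  exact hG.inv_add_diagonal_mul_one_sub_mulVec_mono hb hF hF1 hp₁0 hp₁₂ hp₂1 q

/-- For all `p₁, p₂` with `0 ≤ p₁ ≤ p₂ ≤ 1` entrywise, the matrices
`I + A(diag(pᵢ) + (I − diag(pᵢ))M)` are invertible and `H(p₁) ≤ H(p₂)` entrywise; the map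
`H` is monotone on `[0,1]^{nm}`, where `A = (L* + D)⁻¹ B` and `M = I − F*`. -/
theorem Hmap_monotone
    {n m : ℕ} (hn : 2 ≤ n) (hm : 1 ≤ m)
    (Q : Fin m → Matrix (Fin n) (Fin n) ℝ)
    (hQoff : ∀ (α : Fin m) (i j : Fin n), i ≠ j → 0 ≤ Q α i j)
    (hQdiag : ∀ (α : Fin m) (i : Fin n), Q α i i = -∑ j ∈ Finset.univ \ {i}, Q α i j)
    (hQirr : ∀ (α : Fin m) (i j : Fin n),
      Relation.ReflTransGen (fun a b => 0 < Q α a b) i j)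
    (piv : Fin m → Fin n → ℝ) (hpivpos : ∀ α i, 0 < piv α i)
    (hpiveig : ∀ (α : Fin m) (i : Fin n), ∑ j, Q α j i * piv α j = 0)
    (hpivsum : ∀ α, ∑ i, piv α i = 1)
    (N : Fin m → ℝ) (hN : ∀ α, 0 < N α)
    (β δ : Fin m → Fin n → ℝ)
    (hβ : ∀ α i, 0 < β α i) (hδ : ∀ α i, 0 ≤ δ α i)
    (hδpos : ∀ α, ∃ k, 0 < δ α k)
    (p₁ p₂ : Fin m × Fin n → ℝ)
    (hp₁0 : ∀ q, 0 ≤ p₁ q) (hp₁₂ : ∀ q, p₁ q ≤ p₂ q) (hp₂1 : ∀ q, p₂ q ≤ 1) :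
    IsUnit (1 + Amat Q piv β δ * (Matrix.diagonal p₁
        + (1 - Matrix.diagonal p₁) * (1 - Fstar N piv))) ∧
      IsUnit (1 + Amat Q piv β δ * (Matrix.diagonal p₂
        + (1 - Matrix.diagonal p₂) * (1 - Fstar N piv))) ∧
      (∀ q, Hmap (Amat Q piv β δ) (1 - Fstar N piv) p₁ q
        ≤ Hmap (Amat Q piv β δ) (1 - Fstar N piv) p₂ q) :=
  Hmap_monotone_general Q hQoff hQdiag hQirr piv hpivpos hpiveig N hN β δ hβ hδ hδpos p₁ p₂ hp₁0
    hp₁₂ hp₂1
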